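/- arXiv:1210.7467 — 2 statements merged into one kernel-verified Lean document; each statement's English description precedes it below -/
import Mathlib

section
/- Let G be a simple graph with twin-quotient H, and let F be a twin-free simple graph (F contains no pair of true twins). If F is isomorphic to an induced subgraph of G (there is a graph embedding of F into G), then F is isomorphic to an induced subgraph of H (there is a graph embedding of F into H), obtained by composing the embedding with the quotient map sending each vertex to its twin-equivalence class. -/
/-!
Adjacency in `G` between vertices of distinct twin classes does not depend on the chosen
representatives, so the quotient map is an induced embedding on any set of pairwise
non-twin vertices. An induced embedding reflects true twins, so the image of a twin-free
graph is such a set.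
-/

/-- Two vertices are *true twins* if they are adjacent and have the same
closed neighborhood. -/
def TrueTwins {V : Type*} (G : SimpleGraph V) (u v : V) : Prop :=
  G.Adj u v ∧ ∀ w, w ≠ u → w ≠ v → (G.Adj w u ↔ G.Adj w v)

/-- The twin equivalence: `u = v` or `u` and `v` are true twins. -/
def twinSetoid {V : Type*} (G : SimpleGraph V) : Setoid V where
  r u v := u = v ∨ TrueTwins G u v
  iseqv := by
    constructor
    · intro u; exact Or.inl rfl
    · rintro u v (rfl | ⟨hadj, hnb⟩)
      · exact Or.inl rfl
      · exact Or.inr ⟨hadj.symm, fun w h1 h2 => (hnb w h2 h1).symm⟩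
    · rintro u v w (rfl | huv) (rfl | hvw)
      · exact Or.inl rfl
      · exact Or.inr hvw
      · exact Or.inr huv
      · by_cases huw : u = w
        · exact Or.inl huw
        · refine Or.inr ⟨(hvw.2 u huv.1.ne huw).mp huv.1, fun x hxu hxw => ?_⟩
          by_cases hxv : x = v
          · subst hxv
            exact iff_of_true huv.1.symm hvw.1
          · exact (huv.2 x hxu hxv).trans (hvw.2 x hxv hxw)

/-- The *twin-quotient* of `G`: vertices are twin-equivalence classes, two distinct
classes being adjacent iff some representatives are adjacent in `G`. -/
def twinQuotient {V : Type*} (G : SimpleGraph V) :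
    SimpleGraph (Quotient (twinSetoid G)) where
  Adj C D := C ≠ D ∧ ∃ u v : V,
    Quotient.mk (twinSetoid G) u = C ∧ Quotient.mk (twinSetoid G) v = D ∧ G.Adj u v
  symm := by
    constructor
    rintro C D ⟨hne, u, v, hu, hv, hadj⟩
    exact ⟨hne.symm, v, u, hv, hu, hadj.symm⟩
  loopless := by constructor; rintro C ⟨hne, -⟩; exact hne rfl

section TwinQuotient

variable {V W : Type*} {G : SimpleGraph V}

lemma TrueTwins.of_embedding {F : SimpleGraph W} (f : F ↪g G) {a b : W}
    (h : TrueTwins G (f a) (f b)) : TrueTwins F a b :=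
  ⟨f.map_adj_iff.mp h.1, fun c hca hcb => by
    simpa only [f.map_adj_iff] using h.2 (f c) (f.injective.ne hca) (f.injective.ne hcb)⟩

lemma SimpleGraph.Adj.of_twinSetoid_left {u u' v : V} (huu' : twinSetoid G u u')
    (h : G.Adj u v) (hvu' : v ≠ u') : G.Adj u' v := by
  rcases huu' with rfl | ⟨-, hnb⟩
  · exact h
  · exact ((hnb v h.ne' hvu').mp h.symm).symm

lemma twinQuotient_adj_mk_iff {u v : V} :
    (twinQuotient G).Adj ⟦u⟧ ⟦v⟧ ↔ ¬ twinSetoid G u v ∧ G.Adj u v := by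
  refine ⟨fun ⟨hne, u', v', hu, hv, hadj⟩ => ?_, fun ⟨hnr, hadj⟩ =>
    ⟨fun h => hnr (Quotient.exact h), u, v, rfl, rfl, hadj⟩⟩
  have hnr : ¬ twinSetoid G u v := fun h => hne (Quotient.sound h)
  have hu'u : twinSetoid G u' u := Quotient.exact hu
  have hv'v : twinSetoid G v' v := Quotient.exact hv
  -- `v' ≠ u` because `v'` lies in the class of `v`, which differs from that of `u`
  have hadj_u : G.Adj u v' :=
    hadj.of_twinSetoid_left hu'u fun h => hnr (h ▸ hv'v)
  exact ⟨hnr, (hadj_u.symm.of_twinSetoid_left hv'v fun h => hnr (Or.inl h)).symm⟩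

def SimpleGraph.Embedding.toTwinQuotient {F : SimpleGraph W} (f : F ↪g G)
    (hf : ∀ a b, twinSetoid G (f a) (f b) → a = b) : F ↪g twinQuotient G where
  toFun a := ⟦f a⟧
  inj' a b hab := hf a b (Quotient.exact hab)
  map_rel_iff' {a b} := by
    change (twinQuotient G).Adj ⟦f a⟧ ⟦f b⟧ ↔ F.Adj a b
    rw [twinQuotient_adj_mk_iff, f.map_adj_iff]
    exact ⟨And.right, fun hab => ⟨fun h => hab.ne (hf a b h), hab⟩⟩

end TwinQuotient

/-- If a twin-free graph `F` embeds into `G` as an induced subgraph, then `F` embeds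
into the twin-quotient of `G` as an induced subgraph. -/
theorem embedding_twinQuotient_of_embedding {V W : Type*} (G : SimpleGraph V)
    (F : SimpleGraph W) (hF : ∀ a b : W, ¬ TrueTwins F a b)
    (h : Nonempty (F ↪g G)) :
    Nonempty (F ↪g twinQuotient G) := by
  obtain ⟨f⟩ := h
  refine ⟨f.toTwinQuotient fun a b hab => ?_⟩
  rcases hab with heq | htwin
  · exact f.injective heq
  · exact (hF a b (htwin.of_embedding f)).elim
end

section
/- A simple graph G is a line graph of a multigraph if and only if its twin-quotient H is isomorphic to the line graph of some simple graph. -/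
/-- The line graph of a multigraph given by an endpoint map `ends : E' → Sym2 V'`:
the vertices are the edges `E'`, two distinct edges being adjacent iff their endpoint
pairs share a common vertex. -/
def multiLineGraph {V' E' : Type*} (ends : E' → Sym2 V') : SimpleGraph E' where
  Adj e f := e ≠ f ∧ ∃ x, x ∈ ends e ∧ x ∈ ends f
  symm := by constructor; rintro e f ⟨hne, x, hxe, hxf⟩; exact ⟨hne.symm, x, hxf, hxe⟩
  loopless := by constructor; rintro e ⟨hne, -⟩; exact hne rfl

/-!
Parallel edges of a multigraph are true twins of its line graph, and conversely blowing a vertex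
of a graph up into a clique of true twins amounts to adding parallel copies of an edge. Since
twins are interchangeable, the twin-quotient of any graph is the subgraph induced on a set of
representatives of the twin classes. For the line graph of a multigraph these representatives
are pairwise non-parallel edges, i.e. the edges of a simple graph.
-/

open SimpleGraph Function

section TwinQuotient

variable {V : Type*} {G : SimpleGraph V}

lemma adj_of_twinSetoid_rel {u u' w : V} (h : (twinSetoid G).r u u') (hadj : G.Adj u' w)
    (hw : w ≠ u) : G.Adj u w := by
  rcases h with rfl | ⟨huu', hnbhd⟩
  · exact hadj
  · by_cases hwu' : w = u'
    · exact hwu' ▸ huu'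
    · exact ((hnbhd w hw hwu').2 hadj.symm).symm

lemma twinQuotient_adj_mk {u v : V} :
    (twinQuotient G).Adj (Quotient.mk _ u) (Quotient.mk _ v) ↔
      Quotient.mk (twinSetoid G) u ≠ Quotient.mk _ v ∧ G.Adj u v := by
  constructor
  · rintro ⟨hne, a, b, ha, hb, hab⟩
    have hua : (twinSetoid G).r u a := Quotient.exact ha.symm
    have hvb : (twinSetoid G).r v b := Quotient.exact hb.symm
    have hub : G.Adj u b := adj_of_twinSetoid_rel hua hab fun hbu => hne (hbu ▸ hb)
    have huv : u ≠ v := by rintro rfl; exact hne rfl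
    exact ⟨hne, (adj_of_twinSetoid_rel hvb hub.symm huv).symm⟩
  · rintro ⟨hne, huv⟩
    exact ⟨hne, u, v, rfl, rfl, huv⟩

lemma adj_iff_twinQuotient {u v : V} :
    G.Adj u v ↔ u ≠ v ∧ (Quotient.mk (twinSetoid G) u = Quotient.mk _ v ∨
      (twinQuotient G).Adj (Quotient.mk _ u) (Quotient.mk _ v)) := by
  rw [twinQuotient_adj_mk]
  constructor
  · intro h
    exact ⟨h.ne, or_iff_not_imp_left.2 fun hne => ⟨hne, h⟩⟩
  · rintro ⟨huv, heq | ⟨-, h⟩⟩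
    · exact ((Quotient.exact heq).resolve_left huv).1
    · exact h

lemma twinQuotient_eq_comap_out : twinQuotient G = G.comap Quotient.out := by
  ext C D
  conv_lhs => rw [← Quotient.out_eq C, ← Quotient.out_eq D]
  rw [twinQuotient_adj_mk, Quotient.out_eq, Quotient.out_eq, comap_adj]
  exact and_iff_right_of_imp fun h => by rintro rfl; exact h.ne rfl

end TwinQuotient

section MultiLineGraph

variable {V' E' : Type*}

lemma multiLineGraph_comap {α : Type*} (ends : E' → Sym2 V') {f : α → E'} (hf : Injective f) :
    (multiLineGraph ends).comap f = multiLineGraph (ends ∘ f) := by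
  ext a b
  simp [multiLineGraph, hf.ne_iff]

lemma eq_multiLineGraph_of_iso {V : Type*} {G : SimpleGraph V} {ends : E' → Sym2 V'}
    (ψ : G ≃g multiLineGraph ends) : G = multiLineGraph (ends ∘ ψ) := by
  rw [← multiLineGraph_comap ends ψ.injective]
  ext u v
  exact ψ.map_adj_iff.symm

lemma lineGraph_eq_multiLineGraph {W : Type*} (H : SimpleGraph W) :
    H.lineGraph = multiLineGraph (Subtype.val : H.edgeSet → Sym2 W) := by
  ext e f
  rw [lineGraph_adj_iff_exists]
  rfl

lemma exists_mem_ends_iff (ends : E' → Sym2 V') {e f : E'} :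
    (∃ x, x ∈ ends e ∧ x ∈ ends f) ↔ e = f ∨ (multiLineGraph ends).Adj e f := by
  by_cases hef : e = f
  · subst hef
    exact iff_of_true ⟨_, Sym2.out_fst_mem _, Sym2.out_fst_mem _⟩ (Or.inl rfl)
  · exact ⟨fun h => Or.inr ⟨hef, h⟩, fun h => (h.resolve_left hef).2⟩

lemma twinSetoid_mk_eq_of_ends_eq (ends : E' → Sym2 V') {e f : E'} (h : ends e = ends f) :
    Quotient.mk (twinSetoid (multiLineGraph ends)) e = Quotient.mk _ f := by
  refine Quotient.sound (or_iff_not_imp_left.2 fun hef => ⟨?_, fun g hge hgf => ?_⟩)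
  · have hshare : ∃ x, x ∈ ends e ∧ x ∈ ends f :=
      ⟨_, Sym2.out_fst_mem _, h ▸ Sym2.out_fst_mem _⟩
    exact ((exists_mem_ends_iff ends).1 hshare).resolve_left hef
  · simp only [multiLineGraph, h, ne_eq, hge, hgf, not_false_eq_true, true_and]

lemma injective_ends_comp_out (ends : E' → Sym2 V') :
    Injective (ends ∘ Quotient.out (s := twinSetoid (multiLineGraph ends))) := fun C D h => by
  simpa using twinSetoid_mk_eq_of_ends_eq ends h

lemma twinQuotient_multiLineGraph (ends : E' → Sym2 V') :
    twinQuotient (multiLineGraph ends) = multiLineGraph (ends ∘ Quotient.out) := by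
  rw [twinQuotient_eq_comap_out, multiLineGraph_comap _ Quotient.out_injective]

lemma multiLineGraph_eq_of_iso_twinQuotient {V : Type*} {G : SimpleGraph V}
    {ends : E' → Sym2 V'} (ψ : twinQuotient G ≃g multiLineGraph ends) :
    multiLineGraph (fun v => ends (ψ (Quotient.mk _ v))) = G := by
  ext u v
  rw [adj_iff_twinQuotient (G := G), ← ψ.map_adj_iff, ← ψ.injective.eq_iff,
    ← exists_mem_ends_iff]
  rfl

noncomputable def multiLineGraphIsoLineGraph {ends : E' → Sym2 V'} (hinj : Injective ends)
    (hnd : ∀ e, ¬ (ends e).IsDiag) :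
    multiLineGraph ends ≃g (fromEdgeSet (Set.range ends)).lineGraph where
  toEquiv := Equiv.ofBijective
    (fun e => ⟨ends e, by rw [edgeSet_fromEdgeSet]; exact ⟨⟨e, rfl⟩, hnd e⟩⟩)
    ⟨fun a b h => hinj (congrArg Subtype.val h), by
      rintro ⟨p, hp⟩
      rw [edgeSet_fromEdgeSet] at hp
      obtain ⟨⟨e, rfl⟩, -⟩ := hp
      exact ⟨e, rfl⟩⟩
  map_rel_iff' {a b} := by
    rw [lineGraph_adj_iff_exists]
    exact and_congr_left' (not_congr (Subtype.ext_iff.trans hinj.eq_iff))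

end MultiLineGraph

/-- A simple graph `G` is a line graph of a multigraph iff its twin-quotient is
isomorphic to the line graph of some simple graph. -/
theorem isLineGraphOfMultigraph_iff_twinQuotient_lineGraph {V : Type u}
    (G : SimpleGraph V) :
    (∃ (V' E' : Type u) (ends : E' → Sym2 V'),
        (∀ e, ¬ (ends e).IsDiag) ∧ Nonempty (G ≃g multiLineGraph ends)) ↔
    (∃ (W : Type u) (H' : SimpleGraph W),
        Nonempty (twinQuotient G ≃g H'.lineGraph)) := by
  constructor
  · rintro ⟨V', E', ends, hnd, ⟨ψ⟩⟩
    rw [eq_multiLineGraph_of_iso ψ, twinQuotient_multiLineGraph]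
    exact ⟨V', _, ⟨multiLineGraphIsoLineGraph (injective_ends_comp_out _) fun _ => hnd _⟩⟩
  · rintro ⟨W, H', ⟨φ⟩⟩
    rw [lineGraph_eq_multiLineGraph] at φ
    refine ⟨W, V, fun v => (φ (Quotient.mk _ v) : Sym2 W),
      fun v => H'.not_isDiag_of_mem_edgeSet (φ _).2, ?_⟩
    rw [multiLineGraph_eq_of_iso_twinQuotient φ]
    exact ⟨.refl⟩
end
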